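/- Let G be a solvable group and let n ≥ 3 be an integer, and set X = G^n. Then there exists an automorphism σ of the free group F_n with σ ≠ 1 such that σ_X is the identity map of X; equivalently, the group homomorphism Aut(F_n) → Sym(X), σ ↦ (σ^{-1})_X, is not injective. -/

import Mathlib

/-- The word map `σ_X : X → X` associated to an endomorphism `σ` of the free
group `F_n`, where `X = G^n`. -/
def wordMap {G : Type*} [Group G] {n : ℕ}
    (σ : FreeGroup (Fin n) →* FreeGroup (Fin n)) (x : Fin n → G) : Fin n → G :=
  fun i => FreeGroup.lift x (σ (FreeGroup.of i))

/-!
Let `d` be the derived length of `G`. The free group on the generators other than `f₀` has rank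
`n - 1 ≥ 2`, so it maps onto the non-solvable `S₅` and its `d`-th derived subgroup contains some
`u ≠ 1`. The transvection `f₀ ↦ u f₀` fixing the other generators is then a nontrivial
automorphism of `F_n`, and its word map on `G^n` is the identity because every homomorphism
`F_n → G` kills `u`.
-/

theorem exists_ne_one_mem_derivedSeries {H : Type*} [Group H] (h : ¬ Group.IsSolvable H)
    (d : ℕ) : ∃ w ∈ derivedSeries H d, w ≠ 1 := by
  obtain ⟨⟨w, hw⟩, hw1⟩ := Subgroup.ne_bot_iff_exists_ne_one.mp fun hd => h ⟨d, hd⟩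
  exact ⟨w, hw, fun h1 => hw1 (Subtype.ext h1)⟩

theorem MonoidHom.map_eq_one_of_mem_derivedSeries {H G : Type*} [Group H] [Group G]
    (f : H →* G) {d : ℕ} (hd : derivedSeries G d = ⊥) {w : H} (hw : w ∈ derivedSeries H d) :
    f w = 1 :=
  Subgroup.mem_bot.mp <| hd ▸ map_derivedSeries_le_derivedSeries f d ⟨w, hw, rfl⟩

namespace FreeGroup

theorem not_isSolvable {β : Type*} [Nontrivial β] : ¬ Group.IsSolvable (FreeGroup β) := by
  classical
  obtain ⟨b, c, hbc⟩ := exists_pair_ne β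
  let g : β → Equiv.Perm (Fin 5) :=
    Function.update (fun _ => Equiv.swap 0 (finRotate 5 0)) b (finRotate 5)
  have hsurj : Function.Surjective (lift g) := by
    rw [← MonoidHom.range_eq_top, range_lift_eq_closure, eq_top_iff,
      ← Equiv.Perm.closure_cycle_adjacent_swap (isCycle_finRotate (n := 3))
        (support_finRotate (n := 3)) 0]
    refine Subgroup.closure_mono (Set.insert_subset ⟨b, by simp [g]⟩ ?_)
    exact Set.singleton_subset_iff.mpr ⟨c, by simp [g, hbc.symm]⟩
  exact fun h => Equiv.Perm.not_isSolvable_fin_5 (Group.isSolvable_of_surjective hsurj)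

section Transvection

variable {α : Type*} [DecidableEq α] (a : α)

-- Taking `u` in the free group on the other generators is what makes `f_a ↦ u f_a` invertible.
def transvectionHom (u : FreeGroup {b // b ≠ a}) : FreeGroup α →* FreeGroup α :=
  lift (Function.update of a (map Subtype.val u * of a))

@[simp]
theorem transvectionHom_of_self (u : FreeGroup {b // b ≠ a}) :
    transvectionHom a u (of a) = map Subtype.val u * of a := by
  simp [transvectionHom]

theorem transvectionHom_of_of_ne (u : FreeGroup {b // b ≠ a}) {i : α} (hi : i ≠ a) :
    transvectionHom a u (of i) = of i := by
  simp [transvectionHom, hi]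

@[simp]
theorem transvectionHom_map_val (u v : FreeGroup {b // b ≠ a}) :
    transvectionHom a u (map Subtype.val v) = map Subtype.val v := by
  rw [← MonoidHom.comp_apply]
  congr 1
  exact ext_hom _ _ fun b => by simp [transvectionHom_of_of_ne a u b.2]

theorem transvectionHom_comp (u v : FreeGroup {b // b ≠ a}) :
    (transvectionHom a v).comp (transvectionHom a u) = transvectionHom a (u * v) := by
  refine ext_hom _ _ fun i => ?_
  rcases eq_or_ne i a with rfl | hi
  · simp [mul_assoc]
  · simp [transvectionHom_of_of_ne a _ hi]

theorem transvectionHom_one : transvectionHom a 1 = MonoidHom.id (FreeGroup α) :=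
  ext_hom _ _ fun i => by
    rcases eq_or_ne i a with rfl | hi
    · simp
    · simp [transvectionHom_of_of_ne a _ hi]

def transvection (u : FreeGroup {b // b ≠ a}) : MulAut (FreeGroup α) :=
  (transvectionHom a u).toMulEquiv (transvectionHom a u⁻¹)
    (by rw [transvectionHom_comp, mul_inv_cancel, transvectionHom_one])
    (by rw [transvectionHom_comp, inv_mul_cancel, transvectionHom_one])

theorem transvection_ne_one {u : FreeGroup {b // b ≠ a}} (hu : u ≠ 1) :
    transvection a u ≠ 1 := by
  intro h
  have hfix : transvectionHom a u (of a) = of a := DFunLike.congr_fun h (of a)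
  rw [transvectionHom_of_self, mul_eq_right,
    map_eq_one_iff _ (map_injective Subtype.val_injective)] at hfix
  exact hu hfix

theorem lift_comp_transvectionHom {G : Type*} [Group G] (x : α → G)
    {u : FreeGroup {b // b ≠ a}} (hu : lift x (map Subtype.val u) = 1) :
    (lift x).comp (transvectionHom a u) = lift x :=
  ext_hom _ _ fun i => by
    rcases eq_or_ne i a with rfl | hi
    · simp [hu]
    · simp [transvectionHom_of_of_ne a _ hi]

end Transvection

end FreeGroup

/-- If `G` is solvable and `n ≥ 3`, then there is a nonidentity
automorphism `σ` of `F_n` whose word map on `X = G^n` is the identity; hence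
the homomorphism `Aut(F_n) → Sym(X)`, `σ ↦ (σ⁻¹)_X`, is not injective. -/
theorem exists_nonident_aut_wordMap_id {G : Type*} [Group G] [Group.IsSolvable G]
    {n : ℕ} (hn : 3 ≤ n) :
    ∃ σ : MulAut (FreeGroup (Fin n)), σ ≠ 1 ∧
      ∀ x : Fin n → G, wordMap σ.toMonoidHom x = x := by
  obtain ⟨d, hd⟩ := (Group.isSolvable_def G).mp ‹_›
  let a : Fin n := ⟨0, by omega⟩
  have : Nontrivial {b // b ≠ a} := by
    rw [← Fintype.one_lt_card_iff_nontrivial]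
    simp only [ne_eq, Fintype.card_subtype_compl, Fintype.card_fin, Fintype.card_unique]
    omega
  obtain ⟨u, hu, hu1⟩ :=
    exists_ne_one_mem_derivedSeries (FreeGroup.not_isSolvable (β := {b // b ≠ a})) d
  refine ⟨FreeGroup.transvection a u, FreeGroup.transvection_ne_one a hu1, fun x => ?_⟩
  have hxu : FreeGroup.lift x (FreeGroup.map Subtype.val u) = 1 :=
    ((FreeGroup.lift x).comp (FreeGroup.map Subtype.val)).map_eq_one_of_mem_derivedSeries hd hu
  funext i
  exact (DFunLike.congr_fun (FreeGroup.lift_comp_transvectionHom a x hxu) (FreeGroup.of i)).trans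
    (FreeGroup.lift_apply_of ..)
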